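/- Let Ω ⊆ ℝ² be open, v ∈ C^∞(Ω), p ∈ (1,∞), β > −1, and let x ∈ Ω be a point with Dv(x) ≠ 0 at which |Dv(x)|² Δv(x) + (p − 2) Δ∞v(x) = 0 (the p-Laplace equation in nondivergence form). Let G(y) = |Dv(y)|^{β} Dv(y), and write Λ := (1/(β+1)) |D(|Dv|^{β+1})(x)|². Then: if p = 2, −det DG(x) = Λ; if p > 2, −det DG(x) ≥ Λ; and if 1 < p < 2, (p − 1) Λ ≤ −det DG(x) ≤ Λ. -/

import Mathlib

/-!
At a point where `g = Dv ≠ 0`, write `H = D²v`, a symmetric matrix. Differentiating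
`G = |Dv|^β Dv` gives `DG = |g|^β (I + β ĝ ĝᵀ) H` with `ĝ = g / |g|`, so
`det DG = (β + 1) |g|^{2β} det H`, while `D(|Dv|^{β+1}) = (β + 1) |g|^{β-1} H g`. Both sides
thus carry the factor `(β + 1) |g|^{2β} ≥ 0`, and it remains to compare `-det H` with
`|Hg|² / |g|²`. Cayley–Hamilton gives `|Hg|² = tr H ⟨g, Hg⟩ - det H |g|²`, and the equation
`|g|² tr H = -(p - 2) ⟨g, Hg⟩` turns this into
`-det H = |Hg|² / |g|² + (p - 2) ⟨g, Hg⟩² / |g|⁴`, where by Cauchy–Schwarz the last fraction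
lies between `0` and `|Hg|² / |g|²`.
-/

open Real MeasureTheory
open scoped RealInnerProductSpace

noncomputable section

/-- The Euclidean plane ℝ². -/
abbrev E2 : Type := EuclideanSpace ℝ (Fin 2)

/-- Standard basis vector. -/
def ee (i : Fin 2) : E2 := EuclideanSpace.single i (1 : ℝ)

/-- Partial derivative ∂ᵢf. -/
def pd (i : Fin 2) (f : E2 → ℝ) (x : E2) : ℝ := fderiv ℝ f x (ee i)

/-- Second partial derivative ∂ᵢ∂ⱼf. -/
def pd2 (i j : Fin 2) (f : E2 → ℝ) (x : E2) : ℝ := pd i (pd j f) x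

/-- |Df|², squared Euclidean norm of the gradient. -/
def gradSq (f : E2 → ℝ) (x : E2) : ℝ := (pd 0 f x) ^ 2 + (pd 1 f x) ^ 2

/-- |Df|, Euclidean norm of the gradient. -/
def gradNorm (f : E2 → ℝ) (x : E2) : ℝ := Real.sqrt (gradSq f x)

/-- Laplacian Δf = tr D²f. -/
def lap (f : E2 → ℝ) (x : E2) : ℝ := pd2 0 0 f x + pd2 1 1 f x

/-- ∞-Laplacian Δ∞f = D²f Df · Df. -/
def infLap (f : E2 → ℝ) (x : E2) : ℝ :=
  pd2 0 0 f x * pd 0 f x * pd 0 f x + pd2 0 1 f x * pd 0 f x * pd 1 f x +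
  pd2 1 0 f x * pd 1 f x * pd 0 f x + pd2 1 1 f x * pd 1 f x * pd 1 f x

/-- |D²f|², squared Frobenius norm of the Hessian. -/
def hessFrobSq (f : E2 → ℝ) (x : E2) : ℝ :=
  (pd2 0 0 f x) ^ 2 + (pd2 0 1 f x) ^ 2 + (pd2 1 0 f x) ^ 2 + (pd2 1 1 f x) ^ 2

/-- det D²f, determinant of the Hessian. -/
def detHess (f : E2 → ℝ) (x : E2) : ℝ :=
  pd2 0 0 f x * pd2 1 1 f x - pd2 0 1 f x * pd2 1 0 f x

/-- |D²f Df|². -/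
def hessGradSq (f : E2 → ℝ) (x : E2) : ℝ :=
  (pd2 0 0 f x * pd 0 f x + pd2 0 1 f x * pd 1 f x) ^ 2 +
  (pd2 1 0 f x * pd 0 f x + pd2 1 1 f x * pd 1 f x) ^ 2

/-- Jacobian determinant of the planar map with components `F 0`, `F 1`. -/
def jdet (F : Fin 2 → E2 → ℝ) (x : E2) : ℝ :=
  pd 0 (F 0) x * pd 1 (F 1) x - pd 1 (F 0) x * pd 0 (F 1) x

/-- Squared Frobenius norm of the Jacobian of the planar map with components `F 0`, `F 1`. -/
def jFrobSq (F : Fin 2 → E2 → ℝ) (x : E2) : ℝ :=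
  (pd 0 (F 0) x) ^ 2 + (pd 1 (F 0) x) ^ 2 + (pd 0 (F 1) x) ^ 2 + (pd 1 (F 1) x) ^ 2

/-- Df · Dg. -/
def gradDot (f g : E2 → ℝ) (x : E2) : ℝ :=
  pd 0 f x * pd 0 g x + pd 1 f x * pd 1 g x

/-- D²ψ Dv · Dv. -/
def hessQuad (ψ v : E2 → ℝ) (x : E2) : ℝ :=
  pd2 0 0 ψ x * pd 0 v x * pd 0 v x + pd2 0 1 ψ x * pd 0 v x * pd 1 v x +
  pd2 1 0 ψ x * pd 1 v x * pd 0 v x + pd2 1 1 ψ x * pd 1 v x * pd 1 v x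

/-- (D²v Dv) · Dψ. -/
def hessGradDot (v ψ : E2 → ℝ) (x : E2) : ℝ :=
  (pd2 0 0 v x * pd 0 v x + pd2 0 1 v x * pd 1 v x) * pd 0 ψ x +
  (pd2 1 0 v x * pd 0 v x + pd2 1 1 v x * pd 1 v x) * pd 1 ψ x

/-- Smooth compactly supported test function on Ω. -/
def IsTestOn (ψ : E2 → ℝ) (Ω : Set E2) : Prop :=
  ContDiff ℝ (⊤ : ℕ∞) ψ ∧ HasCompactSupport ψ ∧ tsupport ψ ⊆ Ω

/-- Components of W = |Dv|⁻¹ Dv. -/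
def Wcomp (v : E2 → ℝ) (i : Fin 2) : E2 → ℝ := fun y => (gradNorm v y)⁻¹ * pd i v y

open Matrix

def gradVec (f : E2 → ℝ) (x : E2) : Fin 2 → ℝ := fun i => pd i f x

def hessMat (f : E2 → ℝ) (x : E2) : Matrix (Fin 2) (Fin 2) ℝ := Matrix.of fun i j => pd2 i j f x

def PLaplaceComparison (p X Y : ℝ) : Prop :=
  (p = 2 → X = Y) ∧ (2 < p → Y ≤ X) ∧ (p < 2 → (p - 1) * Y ≤ X ∧ X ≤ Y)

section Comparison

variable {p X Y : ℝ}

theorem pLaplaceComparison_of_eq_add_mul {Z : ℝ} (hX : X = Y + (p - 2) * Z) (hZ : 0 ≤ Z)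
    (hZY : Z ≤ Y) : PLaplaceComparison p X Y := by
  refine ⟨fun hp => ?_, fun hp => ?_, fun hp => ⟨?_, ?_⟩⟩
  · simp [hX, hp]
  · nlinarith
  · nlinarith
  · nlinarith

theorem PLaplaceComparison.mul_left (h : PLaplaceComparison p X Y) {K : ℝ} (hK : 0 ≤ K) :
    PLaplaceComparison p (K * X) (K * Y) := by
  obtain ⟨h₁, h₂, h₃⟩ := h
  refine ⟨fun hp => by rw [h₁ hp], fun hp => mul_le_mul_of_nonneg_left (h₂ hp) hK, fun hp => ?_⟩
  obtain ⟨hl, hu⟩ := h₃ hp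
  exact ⟨by rw [mul_left_comm]; exact mul_le_mul_of_nonneg_left hl hK,
    mul_le_mul_of_nonneg_left hu hK⟩

end Comparison

theorem sq_dotProduct_le {ι : Type*} [Fintype ι] (g w : ι → ℝ) :
    (g ⬝ᵥ w) ^ 2 ≤ (g ⬝ᵥ g) * (w ⬝ᵥ w) := by
  simpa only [dotProduct, sq] using Finset.sum_mul_sq_le_sq_mul_sq Finset.univ g w

section TwoByTwo

variable {H : Matrix (Fin 2) (Fin 2) ℝ}

theorem Matrix.IsSymm.mulVec_dotProduct_mulVec_fin_two (hH : H.IsSymm) (g : Fin 2 → ℝ) :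
    H *ᵥ g ⬝ᵥ H *ᵥ g = H.trace * (g ⬝ᵥ H *ᵥ g) - H.det * (g ⬝ᵥ g) := by
  have h10 : H 1 0 = H 0 1 := hH.apply 0 1
  simp only [dotProduct, mulVec, Fin.sum_univ_two, trace_fin_two, det_fin_two, h10]
  ring

theorem pLaplaceComparison_neg_det {p : ℝ} {g : Fin 2 → ℝ} (hH : H.IsSymm) (hg : 0 < g ⬝ᵥ g)
    (hpl : (g ⬝ᵥ g) * H.trace + (p - 2) * (g ⬝ᵥ H *ᵥ g) = 0) :
    PLaplaceComparison p (-H.det) ((H *ᵥ g ⬝ᵥ H *ᵥ g) / (g ⬝ᵥ g)) := by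
  have hCH := hH.mulVec_dotProduct_mulVec_fin_two g
  refine pLaplaceComparison_of_eq_add_mul (Z := ((g ⬝ᵥ H *ᵥ g) / (g ⬝ᵥ g)) ^ 2) ?_
    (sq_nonneg _) ?_
  · field_simp
    linear_combination (-(g ⬝ᵥ g)) * hCH - (g ⬝ᵥ H *ᵥ g) * hpl
  · rw [div_pow, div_le_div_iff₀ (pow_pos hg 2) hg]
    nlinarith [mul_le_mul_of_nonneg_right (sq_dotProduct_le g (H *ᵥ g)) hg.le]

end TwoByTwo

section Calculus

variable {f g v : E2 → ℝ} {x : E2}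

theorem pd_mul (hf : DifferentiableAt ℝ f x) (hg : DifferentiableAt ℝ g x) (i : Fin 2) :
    pd i (fun y => f y * g y) x = f x * pd i g x + g x * pd i f x := by
  unfold pd
  rw [fderiv_fun_mul hf hg]
  simp

theorem pd_add (hf : DifferentiableAt ℝ f x) (hg : DifferentiableAt ℝ g x) (i : Fin 2) :
    pd i (fun y => f y + g y) x = pd i f x + pd i g x := by
  unfold pd
  rw [fderiv_fun_add hf hg]
  rfl

theorem pd_comp {φ : ℝ → ℝ} {φ' : ℝ} (hφ : HasDerivAt φ φ' (f x))
    (hf : DifferentiableAt ℝ f x) (i : Fin 2) :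
    pd i (fun y => φ (f y)) x = φ' * pd i f x := by
  unfold pd
  rw [show fderiv ℝ (fun y => φ (f y)) x = _ from
    (hφ.comp_hasFDerivAt x hf.hasFDerivAt).fderiv]
  simp

theorem pd2_eq_fderiv_fderiv (hv : ContDiffAt ℝ 2 v x) (i j : Fin 2) :
    pd2 i j v x = fderiv ℝ (fderiv ℝ v) x (ee i) (ee j) := by
  have hdd : DifferentiableAt ℝ (fderiv ℝ v) x :=
    (hv.fderiv_right (m := 1) (by norm_num)).differentiableAt one_ne_zero
  change fderiv ℝ (fun y => fderiv ℝ v y (ee j)) x (ee i) = _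
  simp [fderiv_clm_apply hdd (differentiableAt_const _)]

theorem differentiableAt_pd (hv : ContDiffAt ℝ 2 v x) (j : Fin 2) :
    DifferentiableAt ℝ (pd j v) x :=
  ((hv.fderiv_right (m := 1) (by norm_num)).clm_apply contDiffAt_const).differentiableAt
    one_ne_zero

theorem hessMat_isSymm (hv : ContDiffAt ℝ 2 v x) : (hessMat v x).IsSymm := by
  refine Matrix.IsSymm.ext fun i j => ?_
  simp only [hessMat, of_apply, pd2_eq_fderiv_fderiv hv]
  exact hv.isSymmSndFDerivAt (by simp) _ _

end Calculus

section GradientPowers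

variable {v : E2 → ℝ} {x : E2}

theorem gradSq_eq_dotProduct : gradSq v x = gradVec v x ⬝ᵥ gradVec v x := by
  simp [gradSq, gradVec, dotProduct, Fin.sum_univ_two, sq]

theorem lap_eq_trace : lap v x = (hessMat v x).trace := by
  simp [lap, hessMat, trace_fin_two]

theorem infLap_eq_dotProduct_mulVec :
    infLap v x = gradVec v x ⬝ᵥ hessMat v x *ᵥ gradVec v x := by
  simp only [infLap, gradVec, hessMat, dotProduct, mulVec, of_apply, Fin.sum_univ_two]
  ring

theorem gradNorm_sq : gradNorm v x ^ 2 = gradSq v x :=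
  Real.sq_sqrt (by unfold gradSq; positivity)

theorem hasDerivAt_sqrt_rpow {q : ℝ} (hq : 0 < q) (γ : ℝ) :
    HasDerivAt (fun t => √t ^ γ) (γ * √q ^ (γ - 2) / 2) q := by
  have hs : 0 < √q := Real.sqrt_pos.mpr hq
  refine ((Real.hasDerivAt_rpow_const (p := γ) (Or.inl hs.ne')).comp q
    (Real.hasDerivAt_sqrt hq.ne')).congr_deriv ?_
  rw [show γ - 1 = γ - 2 + 1 by ring, Real.rpow_add_one hs.ne']
  field_simp

variable (hd : ∀ j, DifferentiableAt ℝ (pd j v) x)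
include hd

theorem differentiableAt_gradSq : DifferentiableAt ℝ (gradSq v) x :=
  ((hd 0).pow 2).add ((hd 1).pow 2)

theorem pd_gradSq (i : Fin 2) : pd i (gradSq v) x = 2 * (hessMat v x *ᵥ gradVec v x) i := by
  have hsq : gradSq v = fun y => pd 0 v y * pd 0 v y + pd 1 v y * pd 1 v y := by
    ext y
    simp only [gradSq, sq]
  rw [hsq, pd_add ((hd 0).fun_mul (hd 0)) ((hd 1).fun_mul (hd 1)), pd_mul (hd 0) (hd 0),
    pd_mul (hd 1) (hd 1)]
  simp only [hessMat, gradVec, mulVec, dotProduct, of_apply, Fin.sum_univ_two, pd2]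
  ring

theorem pd_gradNorm_rpow (hq : 0 < gradSq v x) (γ : ℝ) (i : Fin 2) :
    pd i (fun y => gradNorm v y ^ γ) x
      = γ * gradNorm v x ^ (γ - 2) * (hessMat v x *ᵥ gradVec v x) i := by
  show pd i (fun y => √(gradSq v y) ^ γ) x = γ * √(gradSq v x) ^ (γ - 2) * _
  rw [pd_comp (f := gradSq v) (hasDerivAt_sqrt_rpow hq γ) (differentiableAt_gradSq hd),
    pd_gradSq hd]
  ring

theorem differentiableAt_gradNorm_rpow (hq : 0 < gradSq v x) (γ : ℝ) :
    DifferentiableAt ℝ (fun y => gradNorm v y ^ γ) x :=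
  (hasDerivAt_sqrt_rpow hq γ).differentiableAt.comp x (differentiableAt_gradSq hd)

theorem pd_gradNorm_rpow_mul_pd (hq : 0 < gradSq v x) (β : ℝ) (i j : Fin 2) :
    pd i (fun y => gradNorm v y ^ β * pd j v y) x
      = gradNorm v x ^ β * pd2 i j v x
        + pd j v x * (β * gradNorm v x ^ (β - 2) * (hessMat v x *ᵥ gradVec v x) i) := by
  rw [pd_mul (differentiableAt_gradNorm_rpow hd hq β) (hd j), pd_gradNorm_rpow hd hq]
  rfl

theorem jdet_gradNorm_rpow_mul_pd (hq : 0 < gradSq v x) (β : ℝ) :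
    jdet (fun i y => gradNorm v y ^ β * pd i v y) x
      = (β + 1) * (gradNorm v x ^ β) ^ 2 * (hessMat v x).det := by
  have hN : 0 < gradNorm v x := Real.sqrt_pos.mpr hq
  have hpow : gradNorm v x ^ (β - 2) = gradNorm v x ^ β / gradSq v x := by
    rw [Real.rpow_sub hN, Real.rpow_two, gradNorm_sq]
  simp only [jdet, pd_gradNorm_rpow_mul_pd hd hq, hpow, det_fin_two, hessMat, mulVec,
    dotProduct, gradVec, of_apply, Fin.sum_univ_two]
  rw [gradSq] at hq ⊢
  field_simp
  ring

theorem gradSq_gradNorm_rpow (hq : 0 < gradSq v x) (γ : ℝ) :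
    gradSq (fun y => gradNorm v y ^ γ) x
      = γ ^ 2 * (gradNorm v x ^ (γ - 1)) ^ 2
        * ((hessMat v x *ᵥ gradVec v x ⬝ᵥ hessMat v x *ᵥ gradVec v x) / gradSq v x) := by
  have hN : 0 < gradNorm v x := Real.sqrt_pos.mpr hq
  have hpow : gradNorm v x ^ (γ - 2) = gradNorm v x ^ (γ - 1) / gradNorm v x := by
    rw [show γ - 2 = γ - 1 - 1 by ring, Real.rpow_sub_one hN.ne']
  rw [gradSq, pd_gradNorm_rpow hd hq, pd_gradNorm_rpow hd hq, hpow, ← gradNorm_sq]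
  simp only [dotProduct, Fin.sum_univ_two]
  field_simp

end GradientPowers

theorem stmt_12_general (Ω : Set E2) (hΩ : IsOpen Ω) (v : E2 → ℝ)
    (hv : ContDiffOn ℝ (⊤ : ℕ∞) v Ω) (p : ℝ) (β : ℝ) (hβ : -1 < β)
    (x : E2) (hx : x ∈ Ω) (hgrad : gradSq v x ≠ 0)
    (hpl : gradSq v x * lap v x + (p - 2) * infLap v x = 0) :
    (p = 2 → -jdet (fun i y => gradNorm v y ^ β * pd i v y) x
        = (1/(β+1)) * ((pd 0 (fun y => gradNorm v y ^ (β+1)) x) ^ 2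
            + (pd 1 (fun y => gradNorm v y ^ (β+1)) x) ^ 2)) ∧
    (2 < p → (1/(β+1)) * ((pd 0 (fun y => gradNorm v y ^ (β+1)) x) ^ 2
            + (pd 1 (fun y => gradNorm v y ^ (β+1)) x) ^ 2)
        ≤ -jdet (fun i y => gradNorm v y ^ β * pd i v y) x) ∧
    (p < 2 →
      (p - 1) * ((1/(β+1)) * ((pd 0 (fun y => gradNorm v y ^ (β+1)) x) ^ 2
            + (pd 1 (fun y => gradNorm v y ^ (β+1)) x) ^ 2))
        ≤ -jdet (fun i y => gradNorm v y ^ β * pd i v y) x ∧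
      -jdet (fun i y => gradNorm v y ^ β * pd i v y) x
        ≤ (1/(β+1)) * ((pd 0 (fun y => gradNorm v y ^ (β+1)) x) ^ 2
            + (pd 1 (fun y => gradNorm v y ^ (β+1)) x) ^ 2)) := by
  have hv2 : ContDiffAt ℝ 2 v x :=
    (hv.contDiffAt (hΩ.mem_nhds hx)).of_le (WithTop.coe_le_coe.mpr le_top)
  have hd := differentiableAt_pd hv2
  have hq : 0 < gradSq v x := lt_of_le_of_ne (by unfold gradSq; positivity) (Ne.symm hgrad)
  rw [gradSq_eq_dotProduct, lap_eq_trace, infLap_eq_dotProduct_mulVec] at hpl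
  have hK : 0 ≤ (β + 1) * (gradNorm v x ^ β) ^ 2 := mul_nonneg (by linarith) (sq_nonneg _)
  have hcmp := (pLaplaceComparison_neg_det (hessMat_isSymm hv2)
    (gradSq_eq_dotProduct (v := v) ▸ hq) hpl).mul_left hK
  change PLaplaceComparison p _ (1 / (β + 1) * gradSq (fun y => gradNorm v y ^ (β + 1)) x)
  rw [jdet_gradNorm_rpow_mul_pd hd hq, gradSq_gradNorm_rpow hd hq, add_sub_cancel_right,
    gradSq_eq_dotProduct]
  convert hcmp using 1
  · ring
  · field_simp

/-- comparisons between −det DG, G = |Dv|^β Dv, and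
(1/(β+1))|D(|Dv|^{β+1})|² at a point where the p-Laplace equation holds. -/
theorem stmt_12 (Ω : Set E2) (hΩ : IsOpen Ω) (v : E2 → ℝ)
    (hv : ContDiffOn ℝ (⊤ : ℕ∞) v Ω) (p : ℝ) (hp : 1 < p) (β : ℝ) (hβ : -1 < β)
    (x : E2) (hx : x ∈ Ω) (hgrad : gradSq v x ≠ 0)
    (hpl : gradSq v x * lap v x + (p - 2) * infLap v x = 0) :
    (p = 2 → -jdet (fun i y => gradNorm v y ^ β * pd i v y) x
        = (1/(β+1)) * ((pd 0 (fun y => gradNorm v y ^ (β+1)) x) ^ 2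
            + (pd 1 (fun y => gradNorm v y ^ (β+1)) x) ^ 2)) ∧
    (2 < p → (1/(β+1)) * ((pd 0 (fun y => gradNorm v y ^ (β+1)) x) ^ 2
            + (pd 1 (fun y => gradNorm v y ^ (β+1)) x) ^ 2)
        ≤ -jdet (fun i y => gradNorm v y ^ β * pd i v y) x) ∧
    (p < 2 →
      (p - 1) * ((1/(β+1)) * ((pd 0 (fun y => gradNorm v y ^ (β+1)) x) ^ 2
            + (pd 1 (fun y => gradNorm v y ^ (β+1)) x) ^ 2))
        ≤ -jdet (fun i y => gradNorm v y ^ β * pd i v y) x ∧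
      -jdet (fun i y => gradNorm v y ^ β * pd i v y) x
        ≤ (1/(β+1)) * ((pd 0 (fun y => gradNorm v y ^ (β+1)) x) ^ 2
            + (pd 1 (fun y => gradNorm v y ^ (β+1)) x) ^ 2)) :=
  stmt_12_general Ω hΩ v hv p β hβ x hx hgrad hpl
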